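/- arXiv:1606.04768 — 3 statements merged into one kernel-verified Lean document; each statement's English description precedes it below -/
import Mathlib

section
/- Let $Q\subset\mathbb{R}^n$ be a cube, $\varrho\ge 0$, and $\delta>1$. For any measurable $h$ with $\frac{1}{|Q|}\int_Q |h|^\delta < \infty$, the normalized Luxemburg norm satisfies $\|h\|_{L(\log L)^\varrho, Q} \le C(\varrho) \max\{1, (\delta-1)^{-\varrho}\} (\frac{1}{|Q|}\int_Q |h(y)|^\delta dy)^{1/\delta}$, where $\|h\|_{L(\log L)^\varrho, Q} = \inf\{\lambda>0 : \frac{1}{|Q|}\int_Q \frac{|h(y)|}{\lambda}\log^\varrho(1+\frac{|h(y)|}{\lambda})dy \le 1\}$. -/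
/-!
The Young function satisfies `u log^ρ (1 + u) ≤ K (u^δ + u)` with
`K = 2^ρ max(1, ρ^ρ) max(1, (δ - 1)^(-ρ))`: for `u ≤ 1` the logarithm is at most `1`, and for
`u ≥ 1` one uses `log u ≤ u^ε / ε` with `ε = (δ - 1) / ρ`, which turns `log^ρ` into `u^(δ - 1)`.
Put `A = (⨍_Q |h|^δ)^(1/δ)`. By Jensen `⨍_Q |h| ≤ A`, so at any `λ ≥ 2 K A` both averaged terms
are at most `A / λ ≤ 1 / (2 K)`, and every such `λ` is admissible in the Luxemburg norm.
-/

open MeasureTheory ENNReal Set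

noncomputable section

def cubeSet (n : ℕ) (c : Fin n → ℝ) (r : ℝ) : Set (Fin n → ℝ) :=
  {x | ∀ i, x i ∈ Set.Icc (c i - r) (c i + r)}

def IsCube {n : ℕ} (Q : Set (Fin n → ℝ)) : Prop :=
  ∃ c r, 0 < r ∧ Q = cubeSet n c r

/-- The normalized Luxemburg norm `‖h‖_{L(log L)^ϱ, Q}` associated with the
Young function `t log^ϱ(1+t)`. -/
def luxNorm {n : ℕ} (ρ : ℝ) (Q : Set (Fin n → ℝ)) (h : (Fin n → ℝ) → ℝ) : ℝ :=
  sInf {lam : ℝ | 0 < lam ∧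
    (⨍ y in Q, (|h y| / lam) * Real.log (1 + |h y| / lam) ^ ρ) ≤ 1}

namespace Real

lemma add_rpow_le_two_rpow_mul_rpow_add_rpow {a b p : ℝ} (ha : 0 ≤ a) (hb : 0 ≤ b)
    (hp : 0 ≤ p) : (a + b) ^ p ≤ 2 ^ p * (a ^ p + b ^ p) := calc
  (a + b) ^ p ≤ (2 * max a b) ^ p := by
    gcongr
    rw [two_mul]
    exact add_le_add (le_max_left a b) (le_max_right a b)
  _ = 2 ^ p * max a b ^ p := mul_rpow zero_le_two (le_max_of_le_left ha)
  _ ≤ 2 ^ p * (a ^ p + b ^ p) := by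
    gcongr
    rcases le_total a b with hab | hab
    · rw [max_eq_right hab]; linarith [rpow_nonneg ha p]
    · rw [max_eq_left hab]; linarith [rpow_nonneg hb p]

lemma log_one_add_le_one_add_rpow_div {u ε : ℝ} (hu : 0 ≤ u) (hε : 0 < ε) :
    log (1 + u) ≤ 1 + u ^ ε / ε := by
  rcases le_total u 1 with hu1 | hu1
  · have : log (1 + u) ≤ u := by linarith [log_le_sub_one_of_pos (by linarith : 0 < 1 + u)]
    linarith [show 0 ≤ u ^ ε / ε by positivity]
  · calc log (1 + u) ≤ log (2 * u) := log_le_log (by linarith) (by linarith)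
      _ = log 2 + log u := log_mul two_ne_zero (by linarith)
      _ ≤ 1 + u ^ ε / ε := by
        gcongr
        · linarith [log_le_sub_one_of_pos two_pos]
        · exact log_le_rpow_div hu hε

lemma log_one_add_rpow_le {ρ δ u : ℝ} (hρ : 0 ≤ ρ) (hδ : 1 < δ) (hu : 0 ≤ u) :
    log (1 + u) ^ ρ ≤ 2 ^ ρ * (1 + ρ ^ ρ * (δ - 1) ^ (-ρ) * u ^ (δ - 1)) := by
  rcases hρ.eq_or_lt with rfl | hρ
  · simp only [rpow_zero, neg_zero, one_mul, le_add_iff_nonneg_right]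
    positivity
  have hδ₁ : 0 < δ - 1 := sub_pos.2 hδ
  have hε : 0 < (δ - 1) / ρ := div_pos hδ₁ hρ
  calc log (1 + u) ^ ρ ≤ (1 + u ^ ((δ - 1) / ρ) / ((δ - 1) / ρ)) ^ ρ :=
        rpow_le_rpow (log_nonneg (by linarith)) (log_one_add_le_one_add_rpow_div hu hε) hρ.le
    _ ≤ 2 ^ ρ * (1 ^ ρ + (u ^ ((δ - 1) / ρ) / ((δ - 1) / ρ)) ^ ρ) :=
        add_rpow_le_two_rpow_mul_rpow_add_rpow zero_le_one (by positivity) hρ.le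
    _ = 2 ^ ρ * (1 + ρ ^ ρ * (δ - 1) ^ (-ρ) * u ^ (δ - 1)) := by
        rw [one_rpow, div_rpow (by positivity) hε.le, ← rpow_mul hu, div_mul_cancel₀ _ hρ.ne',
          div_rpow hδ₁.le hρ.le, rpow_neg hδ₁.le]
        field_simp

lemma mul_log_one_add_rpow_le {ρ δ u : ℝ} (hρ : 0 ≤ ρ) (hδ : 1 < δ) (hu : 0 ≤ u) :
    u * log (1 + u) ^ ρ ≤ 2 ^ ρ * max 1 (ρ ^ ρ) * max 1 ((δ - 1) ^ (-ρ)) * (u ^ δ + u) := by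
  set M := max 1 (ρ ^ ρ) * max 1 ((δ - 1) ^ (-ρ))
  have hM₁ : 1 ≤ M := one_le_mul_of_one_le_of_one_le (le_max_left _ _) (le_max_left _ _)
  have hM : ρ ^ ρ * (δ - 1) ^ (-ρ) ≤ M :=
    mul_le_mul (le_max_right _ _) (le_max_right _ _) (by positivity) (by positivity)
  have hpow : u ^ δ = u ^ (δ - 1) * u := by
    rw [← rpow_add_one' hu (by linarith), sub_add_cancel]
  calc u * log (1 + u) ^ ρ ≤ u * (2 ^ ρ * (1 + ρ ^ ρ * (δ - 1) ^ (-ρ) * u ^ (δ - 1))) := by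
        gcongr; exact log_one_add_rpow_le hρ hδ hu
    _ ≤ u * (2 ^ ρ * (M + M * u ^ (δ - 1))) := by gcongr
    _ = 2 ^ ρ * max 1 (ρ ^ ρ) * max 1 ((δ - 1) ^ (-ρ)) * (u ^ δ + u) := by
        rw [hpow]; ring

end Real

section ProbabilityMeasure

variable {α : Type*} [MeasurableSpace α] {μ : Measure α} [IsProbabilityMeasure μ]

lemma integral_abs_le_rpow_integral_abs_rpow {f : α → ℝ} {p : ℝ} (hp : 1 ≤ p)
    (hf : Integrable f μ) (hfp : Integrable (fun x => |f x| ^ p) μ) :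
    ∫ x, |f x| ∂μ ≤ (∫ x, |f x| ^ p ∂μ) ^ (1 / p) := by
  have jensen : (∫ x, |f x| ∂μ) ^ p ≤ ∫ x, |f x| ^ p ∂μ :=
    (convexOn_rpow hp).map_integral_le (continuousOn_id.rpow_const fun _ _ => Or.inr (by linarith))
      isClosed_Ici (ae_of_all _ fun x => abs_nonneg (f x)) hf.abs hfp
  rw [one_div, Real.le_rpow_inv_iff_of_pos (integral_nonneg fun x => abs_nonneg (f x))
    (integral_nonneg fun x => by positivity) (by linarith)]
  exact jensen

lemma integral_comp_abs_div_le_one {Φ : ℝ → ℝ} {K δ c : ℝ} (hδ : 1 < δ) (hK : 1 ≤ 2 * K)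
    (hΦ₀ : ∀ u, 0 ≤ u → 0 ≤ Φ u) (hΦ : ∀ u, 0 ≤ u → Φ u ≤ K * (u ^ δ + u))
    {f : α → ℝ} (hf : AEStronglyMeasurable f μ) (hfδ : Integrable (fun x => |f x| ^ δ) μ)
    (hc : 0 < c) (hcf : 2 * K * (∫ x, |f x| ^ δ ∂μ) ^ (1 / δ) ≤ c) :
    ∫ x, Φ (|f x| / c) ∂μ ≤ 1 := by
  set A := (∫ x, |f x| ^ δ ∂μ) ^ (1 / δ)
  have hf₁ : Integrable f μ := (integrable_norm_iff hf).1 <| by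
    simpa using integrable_norm_rpow_of_le hf zero_le_one (by linarith) hδ.le
      (by simpa only [Real.norm_eq_abs] using hfδ)
  have hA : 0 ≤ A := Real.rpow_nonneg (integral_nonneg fun x => by positivity) _
  have hAδ : ∫ x, |f x| ^ δ ∂μ = A ^ δ := by
    simp only [A, one_div]
    rw [Real.rpow_inv_rpow (integral_nonneg fun x => by positivity) (by linarith)]
  have hdiv : (fun x => (|f x| / c) ^ δ) = fun x => |f x| ^ δ / c ^ δ :=
    funext fun x => Real.div_rpow (abs_nonneg (f x)) hc.le _
  have hAc : A / c ≤ 1 := (div_le_one hc).2 ((le_mul_of_one_le_left hA hK).trans hcf)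
  calc ∫ x, Φ (|f x| / c) ∂μ ≤ ∫ x, K * ((|f x| / c) ^ δ + |f x| / c) ∂μ :=
        integral_mono_of_nonneg (ae_of_all _ fun x => hΦ₀ _ (by positivity))
          (((hdiv ▸ hfδ.div_const (c ^ δ)).add (hf₁.abs.div_const c)).const_mul K)
          (ae_of_all _ fun x => hΦ _ (by positivity))
    _ = K * ((A / c) ^ δ + (∫ x, |f x| ∂μ) / c) := by
        rw [integral_const_mul, integral_add (hdiv ▸ hfδ.div_const (c ^ δ)) (hf₁.abs.div_const c),
          hdiv, integral_div, integral_div, hAδ, Real.div_rpow hA hc.le]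
    _ ≤ K * (A / c + A / c) := by
        gcongr
        · linarith
        · exact (Real.rpow_le_rpow_of_exponent_ge' (by positivity) hAc zero_le_one hδ.le).trans_eq
            (Real.rpow_one _)
        · exact integral_abs_le_rpow_integral_abs_rpow hδ.le hf₁ hfδ
    _ = 2 * K * A / c := by ring
    _ ≤ 1 := (div_le_one hc).2 hcf

end ProbabilityMeasure

lemma cubeSet_eq_Icc (n : ℕ) (c : Fin n → ℝ) (r : ℝ) :
    cubeSet n c r = Icc (c - fun _ => r) (c + fun _ => r) := by
  ext x
  simp only [cubeSet, mem_Icc, Pi.le_def, Pi.sub_apply, Pi.add_apply, forall_and]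
  rfl

lemma IsCube.volume_ne_zero {n : ℕ} {Q : Set (Fin n → ℝ)} (hQ : IsCube Q) : volume Q ≠ 0 := by
  obtain ⟨c, r, hr, rfl⟩ := hQ
  rw [cubeSet_eq_Icc, Real.volume_Icc_pi]
  exact Finset.prod_ne_zero_iff.2 fun i _ => by simp; linarith

lemma IsCube.volume_ne_top {n : ℕ} {Q : Set (Fin n → ℝ)} (hQ : IsCube Q) : volume Q ≠ ∞ := by
  obtain ⟨c, r, -, rfl⟩ := hQ
  rw [cubeSet_eq_Icc]
  exact isCompact_Icc.measure_ne_top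

lemma luxNorm_le_of_forall_lt {n : ℕ} {ρ c : ℝ} {Q : Set (Fin n → ℝ)} {h : (Fin n → ℝ) → ℝ}
    (hc : 0 ≤ c)
    (H : ∀ lam, c < lam → (⨍ y in Q, (|h y| / lam) * Real.log (1 + |h y| / lam) ^ ρ) ≤ 1) :
    luxNorm ρ Q h ≤ c :=
  le_of_forall_gt_imp_ge_of_dense fun lam hlam =>
    csInf_le ⟨0, fun _ hx => hx.1.le⟩ ⟨hc.trans_lt hlam, H lam hlam⟩

/-- `‖h‖_{L(log L)^ϱ, Q} ≤ C(ϱ) max{1, (δ-1)^{-ϱ}} (⨍_Q |h|^δ)^{1/δ}`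
for `δ > 1`. -/
theorem statement3 (ρ : ℝ) (hρ : 0 ≤ ρ) :
    ∃ C : ℝ, 0 < C ∧
      ∀ (n : ℕ) (Q : Set (Fin n → ℝ)), IsCube Q →
        ∀ (δ : ℝ), 1 < δ →
          ∀ h : (Fin n → ℝ) → ℝ, Measurable h →
            IntegrableOn (fun y => |h y| ^ δ) Q volume →
            luxNorm ρ Q h ≤
              C * max 1 ((δ - 1) ^ (-ρ)) * (⨍ y in Q, |h y| ^ δ) ^ (1 / δ) := by
  refine ⟨2 * 2 ^ ρ * max 1 (ρ ^ ρ), by positivity, fun n Q hQ δ hδ h hh hhδ => ?_⟩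
  have := isFiniteMeasure_restrict.2 hQ.volume_ne_top
  have : NeZero (volume.restrict Q) := ⟨Measure.restrict_eq_zero.not.2 hQ.volume_ne_zero⟩
  have hK : 1 ≤ 2 ^ ρ * max 1 (ρ ^ ρ) * max 1 ((δ - 1) ^ (-ρ)) :=
    one_le_mul_of_one_le_of_one_le
      (one_le_mul_of_one_le_of_one_le (Real.one_le_rpow one_le_two hρ) (le_max_left _ _))
      (le_max_left _ _)
  have hI : 0 ≤ ⨍ y in Q, |h y| ^ δ := integral_nonneg fun y => by positivity
  refine luxNorm_le_of_forall_lt (by positivity) fun lam hlam => ?_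
  -- `⨍ y in Q` is by definition the integral against the normalized restriction of `volume`.
  exact integral_comp_abs_div_le_one (μ := (volume.restrict Q univ)⁻¹ • volume.restrict Q) hδ
    (by linarith) (fun u hu => mul_nonneg hu (Real.rpow_nonneg (Real.log_nonneg (by linarith)) ρ))
    (fun u hu => Real.mul_log_one_add_rpow_le hρ hδ hu) hh.aestronglyMeasurable hhδ.to_average
    (lt_of_le_of_lt (by positivity) hlam) (le_of_eq_of_le (by rw [average_eq']; ring) hlam.le)
end
end

section
/- Let $K(x;y_1,y_2)$ satisfy the bilinear size condition $|K(x;y_1,y_2)| \le A (|x-y_1|+|x-y_2|)^{-2n}$ for $(x,y_1,y_2)$ with $x\ne y_j$ for some $j$. For $\epsilon>0$ define $A_\epsilon(f_1,f_2)(x) = \int_{\max_j|x-y_j|>\epsilon,\ \min_j|x-y_j|\le\epsilon} |K(x;y_1,y_2)||f_1(y_1)f_2(y_2)|\,dy_1dy_2$. Then $A_\epsilon(f_1,f_2)(x) \le C(n) A\, Mf_1(x)\, Mf_2(x)$ for all $x$ and $\epsilon>0$, where $M$ is the Hardy--Littlewood maximal operator. -/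
open MeasureTheory ENNReal Set

noncomputable section

def avgE {n : ℕ} (Q : Set (Fin n → ℝ)) (f : (Fin n → ℝ) → ℝ≥0∞) : ℝ≥0∞ :=
  (∫⁻ x in Q, f x) / volume Q

/-- The (uncentered, over cubes) Hardy–Littlewood maximal operator of a real
function. -/
def hlMaxR {n : ℕ} (f : (Fin n → ℝ) → ℝ) (x : Fin n → ℝ) : ℝ≥0∞ :=
  ⨆ Q : {Q : Set (Fin n → ℝ) // IsCube Q ∧ x ∈ Q},
    avgE Q.1 fun y => ENNReal.ofReal |f y|

/-- The truncated bilinear integral over the region where at least one `y_j`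
is within distance `ε` of `x` and at least one is beyond distance `ε`. -/
def truncRegionInt {n : ℕ} (K : (Fin n → ℝ) → (Fin n → ℝ) → (Fin n → ℝ) → ℝ)
    (f₁ f₂ : (Fin n → ℝ) → ℝ) (ε : ℝ) (x : Fin n → ℝ) : ℝ≥0∞ :=
  ∫⁻ y in {y : (Fin n → ℝ) × (Fin n → ℝ) |
      ε < max (dist x y.1) (dist x y.2) ∧ min (dist x y.1) (dist x y.2) ≤ ε},
    ENNReal.ofReal (|K x y.1 y.2| * |f₁ y.1| * |f₂ y.2|)

/-!
Cut the region into dyadic shells `2ᵏε ≤ maxⱼ |x - yⱼ| < 2ᵏ⁺¹ε`. On the `k`-th shell the kernel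
is at most `A (2ᵏε)⁻²ⁿ`, and the shell lies in `B(x, ε) × B(x, 2ᵏ⁺¹ε) ∪ B(x, 2ᵏ⁺¹ε) × B(x, ε)`.
Balls for the sup metric are cubes, so the integral of `|f₁(y₁) f₂(y₂)|` over each product is at
most `Mf₁(x) Mf₂(x)` times its volume `(2ε)ⁿ (2ᵏ⁺²ε)ⁿ`. The `k`-th shell therefore contributes
`2 · 8ⁿ · A · 2⁻ⁿᵏ · Mf₁(x) Mf₂(x)`, a geometric series when `n ≥ 1`; for `n = 0` the region is
empty.
-/

section

variable {n : ℕ}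

lemma closedBall_eq_cubeSet (c : Fin n → ℝ) {r : ℝ} (hr : 0 ≤ r) :
    Metric.closedBall c r = cubeSet n c r := by
  ext y
  simp only [closedBall_pi c hr, Real.closedBall_eq_Icc, cubeSet, mem_pi, mem_univ,
    true_implies, mem_ofPred_eq]

lemma avgE_le_hlMaxR (f : (Fin n → ℝ) → ℝ) {Q : Set (Fin n → ℝ)} (hQ : IsCube Q)
    {x : Fin n → ℝ} (hx : x ∈ Q) :
    avgE Q (fun y => ENNReal.ofReal |f y|) ≤ hlMaxR f x :=
  le_iSup_of_le (⟨Q, hQ, hx⟩ : {Q : Set (Fin n → ℝ) // IsCube Q ∧ x ∈ Q}) le_rfl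

lemma setLIntegral_closedBall_le_hlMaxR (f : (Fin n → ℝ) → ℝ) (x : Fin n → ℝ) {r : ℝ}
    (hr : 0 < r) :
    ∫⁻ y in Metric.closedBall x r, ENNReal.ofReal |f y| ≤
      hlMaxR f x * ENNReal.ofReal ((2 * r) ^ n) := by
  have hvol : volume (Metric.closedBall x r) = ENNReal.ofReal ((2 * r) ^ n) := by
    simpa using Real.volume_pi_closedBall x hr.le
  have hcube : IsCube (Metric.closedBall x r) :=
    ⟨x, r, hr, closedBall_eq_cubeSet x hr.le⟩
  calc ∫⁻ y in Metric.closedBall x r, ENNReal.ofReal |f y|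
      = avgE (Metric.closedBall x r) (fun y => ENNReal.ofReal |f y|) *
          volume (Metric.closedBall x r) := by
        rw [avgE, ENNReal.div_mul_cancel (by rw [hvol]; positivity) (by rw [hvol]; simp)]
    _ ≤ hlMaxR f x * ENNReal.ofReal ((2 * r) ^ n) := by
        rw [hvol]
        gcongr
        exact avgE_le_hlMaxR f hcube (Metric.mem_closedBall_self hr.le)

lemma setLIntegral_closedBall_prod_le_hlMaxR {f₁ f₂ : (Fin n → ℝ) → ℝ}
    (hf₁ : Measurable f₁) (hf₂ : Measurable f₂) (x : Fin n → ℝ) {r s : ℝ}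
    (hr : 0 < r) (hs : 0 < s) :
    ∫⁻ y in Metric.closedBall x r ×ˢ Metric.closedBall x s,
        ENNReal.ofReal |f₁ y.1| * ENNReal.ofReal |f₂ y.2| ≤
      hlMaxR f₁ x * hlMaxR f₂ x *
        (ENNReal.ofReal ((2 * r) ^ n) * ENNReal.ofReal ((2 * s) ^ n)) := by
  rw [Measure.volume_eq_prod, ← Measure.prod_restrict,
    lintegral_prod_mul (f := fun y => ENNReal.ofReal |f₁ y|)
    (g := fun y => ENNReal.ofReal |f₂ y|) (by fun_prop) (by fun_prop)]
  calc _ ≤ (hlMaxR f₁ x * ENNReal.ofReal ((2 * r) ^ n)) *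
        (hlMaxR f₂ x * ENNReal.ofReal ((2 * s) ^ n)) :=
        mul_le_mul' (setLIntegral_closedBall_le_hlMaxR f₁ x hr)
          (setLIntegral_closedBall_le_hlMaxR f₂ x hs)
    _ = _ := by ring

lemma abs_le_div_of_le_max_dist {A : ℝ} {K : (Fin n → ℝ) → (Fin n → ℝ) → (Fin n → ℝ) → ℝ}
    (hK : ∀ x y₁ y₂ : Fin n → ℝ, (x ≠ y₁ ∨ x ≠ y₂) →
      |K x y₁ y₂| ≤ A * (dist x y₁ + dist x y₂) ^ (-(2 * n : ℝ)))
    {x y₁ y₂ : Fin n → ℝ} {r : ℝ} (hr : 0 < r) (h : r ≤ max (dist x y₁) (dist x y₂)) :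
    |K x y₁ y₂| ≤ A / r ^ (2 * n) := by
  have hne : x ≠ y₁ ∨ x ≠ y₂ := by
    rcases lt_max_iff.1 (hr.trans_le h) with h' | h'
    exacts [Or.inl (dist_pos.1 h'), Or.inr (dist_pos.1 h')]
  have hsum : r ≤ dist x y₁ + dist x y₂ :=
    h.trans (max_le (le_add_of_nonneg_right dist_nonneg) (le_add_of_nonneg_left dist_nonneg))
  have hK' := hK x y₁ y₂ hne
  rw [Real.rpow_neg (hr.le.trans hsum), show (2 * n : ℝ) = ((2 * n : ℕ) : ℝ) by push_cast; rfl,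
    Real.rpow_natCast, ← div_eq_mul_inv] at hK'
  have hA : 0 ≤ A := by
    have := (abs_nonneg _).trans hK'
    exact nonneg_of_mul_nonneg_left (by simpa [div_eq_mul_inv] using this)
      (inv_pos.2 (pow_pos (hr.trans_le hsum) _))
  exact hK'.trans (div_le_div_of_nonneg_left hA (by positivity) (by gcongr))

def nearFarShell (x : Fin n → ℝ) (ε r : ℝ) : Set ((Fin n → ℝ) × (Fin n → ℝ)) :=
  {y | r ≤ max (dist x y.1) (dist x y.2) ∧ max (dist x y.1) (dist x y.2) < 2 * r ∧
    min (dist x y.1) (dist x y.2) ≤ ε}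

lemma nearFarShell_subset (x : Fin n → ℝ) (ε r : ℝ) :
    nearFarShell x ε r ⊆ Metric.closedBall x ε ×ˢ Metric.closedBall x (2 * r) ∪
      Metric.closedBall x (2 * r) ×ˢ Metric.closedBall x ε := by
  rintro y ⟨-, hmax, hmin⟩
  simp only [mem_union, mem_prod, Metric.mem_closedBall, dist_comm _ x]
  have h₁ := (le_max_left _ _).trans hmax.le
  have h₂ := (le_max_right _ _).trans hmax.le
  rcases min_le_iff.1 hmin with h | h
  exacts [Or.inl ⟨h, h₂⟩, Or.inr ⟨h₁, h⟩]

lemma setOf_near_far_subset_iUnion_nearFarShell (x : Fin n → ℝ) {ε : ℝ} (hε : 0 < ε) :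
    {y : (Fin n → ℝ) × (Fin n → ℝ) |
        ε < max (dist x y.1) (dist x y.2) ∧ min (dist x y.1) (dist x y.2) ≤ ε} ⊆
      ⋃ k : ℕ, nearFarShell x ε (2 ^ k * ε) := by
  rintro y ⟨hfar, hnear⟩
  obtain ⟨k, hk, hk'⟩ := exists_nat_pow_near ((one_le_div hε).2 hfar.le) one_lt_two
  rw [le_div_iff₀ hε] at hk
  rw [div_lt_iff₀ hε, pow_succ, mul_comm _ 2, mul_assoc] at hk'
  exact mem_iUnion.2 ⟨k, hk, hk', hnear⟩

lemma setLIntegral_nearFarShell_le {A : ℝ}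
    {K : (Fin n → ℝ) → (Fin n → ℝ) → (Fin n → ℝ) → ℝ}
    (hK : ∀ x y₁ y₂ : Fin n → ℝ, (x ≠ y₁ ∨ x ≠ y₂) →
      |K x y₁ y₂| ≤ A * (dist x y₁ + dist x y₂) ^ (-(2 * n : ℝ)))
    {f₁ f₂ : (Fin n → ℝ) → ℝ} (hf₁ : Measurable f₁) (hf₂ : Measurable f₂)
    (x : Fin n → ℝ) {ε r : ℝ} (hε : 0 < ε) (hr : 0 < r) :
    ∫⁻ y in nearFarShell x ε r, ENNReal.ofReal (|K x y.1 y.2| * |f₁ y.1| * |f₂ y.2|) ≤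
      ENNReal.ofReal (2 * 8 ^ n * A * (ε / r) ^ n) * (hlMaxR f₁ x * hlMaxR f₂ x) := by
  set B := A / r ^ (2 * n)
  have hpointwise : ∀ y ∈ nearFarShell x ε r,
      ENNReal.ofReal (|K x y.1 y.2| * |f₁ y.1| * |f₂ y.2|) ≤
        ENNReal.ofReal B * (ENNReal.ofReal |f₁ y.1| * ENNReal.ofReal |f₂ y.2|) := by
    intro y hy
    have hKB : |K x y.1 y.2| ≤ B := abs_le_div_of_le_max_dist hK hr hy.1
    rw [← ENNReal.ofReal_mul (abs_nonneg _), ← ENNReal.ofReal_mul ((abs_nonneg _).trans hKB),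
      ← mul_assoc]
    gcongr
  have hconst : B * (2 * ((2 * ε) ^ n * (2 * (2 * r)) ^ n)) = 2 * 8 ^ n * A * (ε / r) ^ n := by
    simp only [B, div_pow]
    field_simp
    rw [show (8 : ℝ) ^ n = 2 ^ n * 4 ^ n by rw [← mul_pow]; norm_num]
    ring
  calc _ ≤ ∫⁻ y in nearFarShell x ε r,
        ENNReal.ofReal B * (ENNReal.ofReal |f₁ y.1| * ENNReal.ofReal |f₂ y.2|) :=
        setLIntegral_mono (by fun_prop) hpointwise
    _ ≤ ENNReal.ofReal B * ∫⁻ y in Metric.closedBall x ε ×ˢ Metric.closedBall x (2 * r) ∪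
          Metric.closedBall x (2 * r) ×ˢ Metric.closedBall x ε,
          ENNReal.ofReal |f₁ y.1| * ENNReal.ofReal |f₂ y.2| := by
        rw [lintegral_const_mul' _ _ ofReal_ne_top]
        gcongr
        exact nearFarShell_subset x ε r
    _ ≤ ENNReal.ofReal B * (hlMaxR f₁ x * hlMaxR f₂ x *
          (ENNReal.ofReal ((2 * ε) ^ n) * ENNReal.ofReal ((2 * (2 * r)) ^ n)) +
        hlMaxR f₁ x * hlMaxR f₂ x *
          (ENNReal.ofReal ((2 * (2 * r)) ^ n) * ENNReal.ofReal ((2 * ε) ^ n))) := by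
        gcongr
        refine (lintegral_union_le _ _ _).trans (add_le_add ?_ ?_)
        exacts [setLIntegral_closedBall_prod_le_hlMaxR hf₁ hf₂ x hε (by positivity),
          setLIntegral_closedBall_prod_le_hlMaxR hf₁ hf₂ x (by positivity) hε]
    _ = ENNReal.ofReal (B * (2 * ((2 * ε) ^ n * (2 * (2 * r)) ^ n))) *
          (hlMaxR f₁ x * hlMaxR f₂ x) := by
        rw [ENNReal.ofReal_mul' (by positivity), ENNReal.ofReal_mul zero_le_two,
          ENNReal.ofReal_mul (by positivity), ENNReal.ofReal_ofNat]
        ring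
    _ = _ := by rw [hconst]

lemma setLIntegral_nearFarShell_two_pow_le {A : ℝ}
    {K : (Fin n → ℝ) → (Fin n → ℝ) → (Fin n → ℝ) → ℝ}
    (hK : ∀ x y₁ y₂ : Fin n → ℝ, (x ≠ y₁ ∨ x ≠ y₂) →
      |K x y₁ y₂| ≤ A * (dist x y₁ + dist x y₂) ^ (-(2 * n : ℝ)))
    {f₁ f₂ : (Fin n → ℝ) → ℝ} (hf₁ : Measurable f₁) (hf₂ : Measurable f₂)
    (hn : n ≠ 0) (x : Fin n → ℝ) {ε : ℝ} (hε : 0 < ε) (k : ℕ) :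
    ∫⁻ y in nearFarShell x ε (2 ^ k * ε),
        ENNReal.ofReal (|K x y.1 y.2| * |f₁ y.1| * |f₂ y.2|) ≤
      ENNReal.ofReal (2 * 8 ^ n * A) * 2⁻¹ ^ k * (hlMaxR f₁ x * hlMaxR f₂ x) := by
  refine (setLIntegral_nearFarShell_le hK hf₁ hf₂ x hε (by positivity)).trans ?_
  have hratio : ε / (2 ^ k * ε) = (2⁻¹ : ℝ) ^ k := by
    rw [inv_pow, div_mul_eq_div_div_swap, div_self hε.ne', one_div]
  rw [hratio, ENNReal.ofReal_mul' (by positivity)]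
  gcongr
  calc ENNReal.ofReal (((2⁻¹ : ℝ) ^ k) ^ n) ≤ ENNReal.ofReal ((2⁻¹ : ℝ) ^ k) :=
        ENNReal.ofReal_le_ofReal (pow_le_of_le_one (by positivity)
          (pow_le_one₀ (by positivity) (by norm_num)) hn)
    _ = 2⁻¹ ^ k := by
        rw [ENNReal.ofReal_pow (by positivity), ENNReal.ofReal_inv_of_pos two_pos,
          ENNReal.ofReal_ofNat]

lemma truncRegionInt_fin_zero (K : (Fin 0 → ℝ) → (Fin 0 → ℝ) → (Fin 0 → ℝ) → ℝ)
    (f₁ f₂ : (Fin 0 → ℝ) → ℝ) {ε : ℝ} (hε : 0 ≤ ε) (x : Fin 0 → ℝ) :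
    truncRegionInt K f₁ f₂ ε x = 0 := by
  have hempty : {y : (Fin 0 → ℝ) × (Fin 0 → ℝ) |
      ε < max (dist x y.1) (dist x y.2) ∧ min (dist x y.1) (dist x y.2) ≤ ε} = ∅ := by
    ext y
    simp [Subsingleton.elim x y.1, Subsingleton.elim y.1 y.2, hε]
  rw [truncRegionInt, hempty, Measure.restrict_empty, lintegral_zero_measure]

end

/-- under the bilinear size condition
`|K(x;y₁,y₂)| ≤ A (|x-y₁|+|x-y₂|)^{-2n}`, the truncated region integral
satisfies `A_ε(f₁,f₂)(x) ≤ C(n) A Mf₁(x) Mf₂(x)`. -/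
theorem statement12 (n : ℕ) :
    ∃ C : ℝ, 0 < C ∧
      ∀ (A : ℝ) (K : (Fin n → ℝ) → (Fin n → ℝ) → (Fin n → ℝ) → ℝ),
        (∀ x y₁ y₂ : Fin n → ℝ, (x ≠ y₁ ∨ x ≠ y₂) →
          |K x y₁ y₂| ≤ A * (dist x y₁ + dist x y₂) ^ (-(2 * n : ℝ))) →
        ∀ (f₁ f₂ : (Fin n → ℝ) → ℝ), Measurable f₁ → Measurable f₂ →
          ∀ (ε : ℝ), 0 < ε → ∀ x : Fin n → ℝ,
            truncRegionInt K f₁ f₂ ε x ≤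
              ENNReal.ofReal (C * A) * hlMaxR f₁ x * hlMaxR f₂ x := by
  refine ⟨4 * 8 ^ n, by positivity, fun A K hK f₁ f₂ hf₁ hf₂ ε hε x => ?_⟩
  rcases eq_or_ne n 0 with rfl | hn
  · simp [truncRegionInt_fin_zero K f₁ f₂ hε.le x]
  calc truncRegionInt K f₁ f₂ ε x
      ≤ ∑' k : ℕ, ∫⁻ y in nearFarShell x ε (2 ^ k * ε),
          ENNReal.ofReal (|K x y.1 y.2| * |f₁ y.1| * |f₂ y.2|) :=
        (lintegral_mono_set (setOf_near_far_subset_iUnion_nearFarShell x hε)).trans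
          (lintegral_iUnion_le _ _)
    _ ≤ ∑' k : ℕ, ENNReal.ofReal (2 * 8 ^ n * A) * 2⁻¹ ^ k * (hlMaxR f₁ x * hlMaxR f₂ x) :=
        ENNReal.tsum_le_tsum fun k =>
          setLIntegral_nearFarShell_two_pow_le hK hf₁ hf₂ hn x hε k
    _ = ENNReal.ofReal (4 * 8 ^ n * A) * hlMaxR f₁ x * hlMaxR f₂ x := by
        rw [ENNReal.tsum_mul_right, ENNReal.tsum_mul_left, ENNReal.tsum_geometric_two,
          show (4 * 8 ^ n * A : ℝ) = 2 * 8 ^ n * A * 2 by ring,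
          ENNReal.ofReal_mul' zero_le_two, ENNReal.ofReal_ofNat]
        ring
end
end

section
/- Let $K(x;y_1,\dots,y_m)$ satisfy the size condition $|K(x;y_1,\dots,y_m)|\le A(\sum_{j=1}^m |x-y_j|)^{-mn}$ and the regularity condition: for all $x,x',y_1,\dots,y_m$ with $8|x-x'| < \min_j|x-y_j|$ and all $D$ with $2|x-x'|<D$ and $4D<\min_j|x-y_j|$, $|K(x;\vec y) - K(x';\vec y)| \le A\, D^\gamma (\sum_j|x-y_j|)^{-mn-\gamma}$ for some $\gamma>0$. Then for any ball $B = B(x_0,r)$, any $x,x'\in B(x_0, r/8)$, and any functions $f_1,\dots,f_m$ supported outside $B$, $|\int K(x;\vec y)\prod f_j(y_j)d\vec y - \int K(x';\vec y)\prod f_j(y_j)d\vec y| \le C(n,m,\gamma) A \prod_{j=1}^m Mf_j(x_0)$. -/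
/-!
When every `y j` lies outside the ball, either `x` is farther than `4 r` from all of them, and
the regularity condition with `D = r` applies, or some `y j` lies within `5 r` of `x₀`, and the
size condition bounds both terms. In both cases the kernel difference is at most
`C A ∏ⱼ r^δ / |y j - x₀|^(n + δ)` with `δ = min γ n / m`. This weight is a product of one-variable
weights, so by Tonelli the multilinear integral factors, and each factor is bounded by
`M f_j (x₀)` by summing the averages of `|f_j|` over the dyadic annuli
`2^k r ≤ |z - x₀| < 2^(k+1) r`, whose contributions decay like `2^(-k δ)`.
-/

open MeasureTheory ENNReal Set

noncomputable section

theorem MeasureTheory.lintegral_fintype_prod_eq_prod {ι : Type*} [Fintype ι] {E : ι → Type*}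
    [∀ i, MeasurableSpace (E i)] {μ : (i : ι) → Measure (E i)} [∀ i, SigmaFinite (μ i)]
    {f : (i : ι) → E i → ℝ≥0∞} (hf : ∀ i, Measurable (f i)) :
    ∫⁻ x, ∏ i, f i (x i) ∂Measure.pi μ = ∏ i, ∫⁻ x, f i x ∂μ i := by
  classical
  rcases isEmpty_or_nonempty (∀ i, E i) with hE | ⟨⟨x₀⟩⟩
  · obtain ⟨i, hi⟩ := isEmpty_pi.1 hE
    have hzero : ∏ i, ∫⁻ x, f i x ∂μ i = 0 :=
      Finset.prod_eq_zero (Finset.mem_univ i) (lintegral_of_isEmpty _ _)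
    simp [hzero]
  have hF : Measurable fun x : ∀ i, E i ↦ ∏ i, f i (x i) :=
    Finset.measurable_prod _ fun i _ ↦ (hf i).comp (measurable_pi_apply i)
  have hmarg : ∀ (s : Finset ι) (x : ∀ i, E i),
      (∫⋯∫⁻_s, fun x ↦ ∏ i, f i (x i) ∂μ) x =
        (∏ i ∈ s, ∫⁻ t, f i t ∂μ i) * ∏ i ∈ sᶜ, f i (x i) := by
    intro s
    induction s using Finset.induction_on with
    | empty => simp
    | @insert i s hi ih =>
      intro x
      have hupdate : ∀ t : E i, (∫⋯∫⁻_s, fun x ↦ ∏ i, f i (x i) ∂μ) (Function.update x i t) =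
          ((∏ j ∈ s, ∫⁻ t, f j t ∂μ j) * ∏ j ∈ (insert i s)ᶜ, f j (x j)) * f i t := by
        intro t
        have hrest : ∏ j ∈ sᶜ.erase i, f j (Function.update x i t j) =
            ∏ j ∈ sᶜ.erase i, f j (x j) :=
          Finset.prod_congr rfl fun j hj ↦ by rw [Function.update_of_ne (Finset.ne_of_mem_erase hj)]
        rw [ih, ← Finset.mul_prod_erase _ _ (Finset.mem_compl.2 hi), hrest, Finset.compl_insert,
          Function.update_self]
        ring
      simp_rw [lmarginal_insert _ hF hi, hupdate]
      rw [lintegral_const_mul _ (hf i), Finset.prod_insert hi]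
      ring
  rw [lintegral_eq_lmarginal_univ x₀, hmarg, Finset.compl_univ, Finset.prod_empty, mul_one]

lemma ofReal_abs_integral_sub_le_mul_prod_lintegral {E : Type*} [MeasurableSpace E]
    {μ : Measure E} [SigmaFinite μ] {ι : Type*} [Fintype ι] {k₁ k₂ : (ι → E) → ℝ}
    {f : ι → E → ℝ} {w : E → ℝ} {S : Set E} {B : ℝ} (hf : ∀ j, Measurable (f j)) (hw : Measurable w)
    (hw₀ : ∀ z, 0 ≤ w z) (hS : ∀ j, Function.support (f j) ⊆ S)
    (hk : ∀ y, (∀ j, y j ∈ S) → |k₁ y - k₂ y| ≤ B * ∏ j, w (y j))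
    (h₁ : Integrable (fun y ↦ k₁ y * ∏ j, f j (y j)) (Measure.pi fun _ ↦ μ))
    (h₂ : Integrable (fun y ↦ k₂ y * ∏ j, f j (y j)) (Measure.pi fun _ ↦ μ)) :
    ENNReal.ofReal |(∫ y, k₁ y * ∏ j, f j (y j) ∂Measure.pi fun _ ↦ μ) -
        ∫ y, k₂ y * ∏ j, f j (y j) ∂Measure.pi fun _ ↦ μ| ≤
      ENNReal.ofReal B * ∏ j, ∫⁻ z, ENNReal.ofReal (w z * |f j z|) ∂μ := by
  have hpointwise : ∀ y, ENNReal.ofReal |k₁ y * ∏ j, f j (y j) - k₂ y * ∏ j, f j (y j)| ≤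
      ENNReal.ofReal B * ∏ j, ENNReal.ofReal (w (y j) * |f j (y j)|) := by
    intro y
    rw [← ENNReal.ofReal_prod_of_nonneg fun j _ ↦ mul_nonneg (hw₀ _) (abs_nonneg _),
      ← ENNReal.ofReal_mul' (Finset.prod_nonneg fun j _ ↦ mul_nonneg (hw₀ _) (abs_nonneg _)),
      ← sub_mul, abs_mul, Finset.abs_prod]
    refine ENNReal.ofReal_le_ofReal ?_
    by_cases hy : ∀ j, y j ∈ S
    · rw [Finset.prod_mul_distrib, ← mul_assoc]
      exact mul_le_mul_of_nonneg_right (hk y hy) (Finset.prod_nonneg fun j _ ↦ abs_nonneg _)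
    · push Not at hy
      obtain ⟨j, hj⟩ := hy
      have hfj : f j (y j) = 0 := Function.notMem_support.1 fun h ↦ hj (hS j h)
      rw [Finset.prod_eq_zero (Finset.mem_univ j) (by rw [hfj, abs_zero]), mul_zero,
        Finset.prod_eq_zero (Finset.mem_univ j) (by rw [hfj, abs_zero, mul_zero]), mul_zero]
  calc ENNReal.ofReal |(∫ y, k₁ y * ∏ j, f j (y j) ∂Measure.pi fun _ ↦ μ) -
        ∫ y, k₂ y * ∏ j, f j (y j) ∂Measure.pi fun _ ↦ μ|
      = ‖∫ y, (k₁ y * ∏ j, f j (y j) - k₂ y * ∏ j, f j (y j)) ∂Measure.pi fun _ ↦ μ‖ₑ := by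
        rw [integral_sub h₁ h₂, Real.enorm_eq_ofReal_abs]
    _ ≤ ∫⁻ y, ENNReal.ofReal |k₁ y * ∏ j, f j (y j) - k₂ y * ∏ j, f j (y j)|
          ∂Measure.pi fun _ ↦ μ := by
        simp_rw [← Real.enorm_eq_ofReal_abs]
        exact enorm_integral_le_lintegral_enorm _
    _ ≤ ∫⁻ y, ENNReal.ofReal B * ∏ j, ENNReal.ofReal (w (y j) * |f j (y j)|)
          ∂Measure.pi fun _ ↦ μ := lintegral_mono hpointwise
    _ = ENNReal.ofReal B * ∏ j, ∫⁻ z, ENNReal.ofReal (w z * |f j z|) ∂μ := by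
        rw [lintegral_const_mul' _ _ ENNReal.ofReal_ne_top,
          lintegral_fintype_prod_eq_prod (f := fun j z ↦ ENNReal.ofReal (w z * |f j z|))
            fun j ↦ (hw.mul (hf j).abs).ennreal_ofReal]

lemma cubeSet_eq_closedBall {n : ℕ} (c : Fin n → ℝ) {R : ℝ} (hR : 0 ≤ R) :
    cubeSet n c R = Metric.closedBall c R := by
  ext z
  simp only [cubeSet, closedBall_pi c hR, Real.closedBall_eq_Icc, Set.mem_univ_pi]
  rfl

lemma lintegral_closedBall_le_hlMaxR {n : ℕ} (f : (Fin n → ℝ) → ℝ) (x₀ : Fin n → ℝ) {R : ℝ}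
    (hR : 0 < R) :
    ∫⁻ z in Metric.closedBall x₀ R, ENNReal.ofReal |f z| ≤
      ENNReal.ofReal (2 * R) ^ n * hlMaxR f x₀ := by
  have hcube : IsCube (Metric.closedBall x₀ R) :=
    ⟨x₀, R, hR, (cubeSet_eq_closedBall x₀ hR.le).symm⟩
  have havg : avgE (Metric.closedBall x₀ R) (fun z ↦ ENNReal.ofReal |f z|) ≤ hlMaxR f x₀ :=
    le_iSup (fun Q : {Q : Set (Fin n → ℝ) // IsCube Q ∧ x₀ ∈ Q} ↦
      avgE Q.1 fun y ↦ ENNReal.ofReal |f y|)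
      ⟨_, hcube, Metric.mem_closedBall_self hR.le⟩
  have hvol : volume (Metric.closedBall x₀ R) = ENNReal.ofReal (2 * R) ^ n := by
    rw [Real.volume_pi_closedBall x₀ hR.le, Fintype.card_fin, ENNReal.ofReal_pow (by positivity)]
  rw [avgE, hvol, ENNReal.div_le_iff (pow_ne_zero _ (ENNReal.ofReal_pos.2 (by linarith)).ne')
    (ENNReal.pow_ne_top ENNReal.ofReal_ne_top)] at havg
  rwa [mul_comm]

section RealInequalities

open Finset

variable {ι : Type*}

lemma Finset.prod_rpow_le_rpow_mul_card {s : ι → ℝ} (t : Finset ι) {b ν : ℝ}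
    (hs : ∀ i ∈ t, 0 ≤ s i) (hsb : ∀ i ∈ t, s i ≤ b) (hb : 0 ≤ b) (hν : 0 ≤ ν) :
    ∏ i ∈ t, s i ^ ν ≤ b ^ (ν * #t) :=
  calc ∏ i ∈ t, s i ^ ν ≤ ∏ _i ∈ t, b ^ ν :=
        prod_le_prod (fun i hi ↦ Real.rpow_nonneg (hs i hi) ν)
          fun i hi ↦ Real.rpow_le_rpow (hs i hi) (hsb i hi) hν
    _ = b ^ (ν * #t) := by rw [prod_const, Real.rpow_mul_natCast hb]

variable [Fintype ι]

lemma rpow_mul_rpow_le_rpow_mul_rpow {r σ a b c d : ℝ} (hr : 0 < r) (hrσ : r ≤ σ) (hab : a ≤ b)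
    (h : b + d = a + c) : r ^ b * σ ^ d ≤ r ^ a * σ ^ c := by
  have hσ : 0 < σ := hr.trans_le hrσ
  calc r ^ b * σ ^ d = r ^ a * (r ^ (b - a) * σ ^ d) := by
        rw [← mul_assoc, ← Real.rpow_add hr, add_sub_cancel]
    _ ≤ r ^ a * (σ ^ (b - a) * σ ^ d) := by
        gcongr
    _ = r ^ a * σ ^ c := by
        rw [← Real.rpow_add hσ]
        congr 2
        linarith

lemma prod_rpow_div_rpow {s : ι → ℝ} {r δ ν : ℝ} (hr : 0 ≤ r) :
    ∏ i, r ^ δ / s i ^ ν = r ^ (δ * Fintype.card ι) / ∏ i, s i ^ ν := by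
  rw [Finset.prod_div_distrib, prod_const, card_univ, Real.rpow_mul_natCast hr]

lemma rpow_neg_le_mul_rpow_neg {σ T c p : ℝ} (hσ : 0 < σ) (hc : 0 ≤ c) (hσT : σ ≤ c * T)
    (hp : 0 ≤ p) : T ^ (-p) ≤ c ^ p * σ ^ (-p) := by
  have hT : 0 < T := pos_of_mul_pos_right (hσ.trans_le hσT) hc
  rw [Real.rpow_neg hT.le, Real.rpow_neg hσ.le, ← div_eq_mul_inv, inv_eq_one_div,
    div_le_div_iff₀ (Real.rpow_pos_of_pos hT p) (Real.rpow_pos_of_pos hσ p), one_mul,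
    ← Real.mul_rpow hc hT.le]
  exact Real.rpow_le_rpow hσ.le hσT hp

variable {s : ι → ℝ} {r κ δ : ℝ}

lemma rpow_mul_sum_rpow_neg_le_prod [Nonempty ι] {γ : ℝ} (hr : 0 < r) (hs : ∀ i, r ≤ s i)
    (hκ : 0 ≤ κ) (hδ : 0 ≤ δ) (hδγ : δ * Fintype.card ι ≤ γ) :
    r ^ γ * (∑ i, s i) ^ (-(Fintype.card ι * κ) - γ) ≤ ∏ i, r ^ δ / s i ^ (κ + δ) := by
  obtain ⟨i₀⟩ := ‹Nonempty ι›
  have hs₀ : ∀ i, 0 < s i := fun i ↦ hr.trans_le (hs i)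
  have hsσ : ∀ i, s i ≤ ∑ i, s i := fun i ↦
    single_le_sum (fun j _ ↦ (hs₀ j).le) (mem_univ i)
  have hrσ : r ≤ ∑ i, s i := (hs i₀).trans (hsσ i₀)
  have hσ : 0 < ∑ i, s i := hr.trans_le hrσ
  have hprod : ∏ i, s i ^ (κ + δ) ≤ (∑ i, s i) ^ ((κ + δ) * Fintype.card ι) :=
    prod_rpow_le_rpow_mul_card univ (fun i _ ↦ (hs₀ i).le) (fun i _ ↦ hsσ i) hσ.le (by linarith)
  rw [prod_rpow_div_rpow hr.le, sub_eq_add_neg, ← neg_add, Real.rpow_neg hσ.le, ← div_eq_mul_inv,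
    div_le_div_iff₀ (Real.rpow_pos_of_pos hσ _)
      (prod_pos fun i _ ↦ Real.rpow_pos_of_pos (hs₀ i) _)]
  calc r ^ γ * ∏ i, s i ^ (κ + δ) ≤ r ^ γ * (∑ i, s i) ^ ((κ + δ) * Fintype.card ι) := by gcongr
    _ ≤ r ^ (δ * Fintype.card ι) * (∑ i, s i) ^ (Fintype.card ι * κ + γ) :=
        rpow_mul_rpow_le_rpow_mul_rpow hr hrσ hδγ (by ring)

lemma sum_rpow_neg_le_mul_prod {c : ℝ} {i₀ : ι} (hr : 0 < r) (hs : ∀ i, r ≤ s i)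
    (hi₀ : s i₀ ≤ c * r) (hκ : 0 ≤ κ) (hδ : 0 ≤ δ) (hδκ : δ * (Fintype.card ι - 1) ≤ κ) :
    (∑ i, s i) ^ (-(Fintype.card ι * κ)) ≤ c ^ (κ + δ) * ∏ i, r ^ δ / s i ^ (κ + δ) := by
  classical
  have hs₀ : ∀ i, 0 < s i := fun i ↦ hr.trans_le (hs i)
  have hsσ : ∀ i, s i ≤ ∑ i, s i := fun i ↦
    single_le_sum (fun j _ ↦ (hs₀ j).le) (mem_univ i)
  have hrσ : r ≤ ∑ i, s i := (hs i₀).trans (hsσ i₀)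
  have hσ : 0 < ∑ i, s i := hr.trans_le hrσ
  have hc : 0 ≤ c := nonneg_of_mul_nonneg_left ((hs₀ i₀).le.trans hi₀) hr
  have hcard : ((univ.erase i₀).card : ℝ) = Fintype.card ι - 1 := by
    rw [card_erase_of_mem (mem_univ i₀), card_univ,
      Nat.cast_sub (Fintype.card_pos_iff.2 ⟨i₀⟩), Nat.cast_one]
  have hprod : ∏ i, s i ^ (κ + δ) ≤
      c ^ (κ + δ) * (r ^ (κ + δ) * (∑ i, s i) ^ ((κ + δ) * (Fintype.card ι - 1))) := by
    rw [← mul_prod_erase univ _ (mem_univ i₀), ← mul_assoc, ← Real.mul_rpow hc hr.le, ← hcard]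
    exact mul_le_mul (Real.rpow_le_rpow (hs₀ i₀).le hi₀ (by linarith))
      (prod_rpow_le_rpow_mul_card _ (fun i _ ↦ (hs₀ i).le) (fun i _ ↦ hsσ i) hσ.le (by linarith))
      (prod_nonneg fun i _ ↦ Real.rpow_nonneg (hs₀ i).le _) (Real.rpow_nonneg (by positivity) _)
  rw [prod_rpow_div_rpow hr.le, Real.rpow_neg hσ.le, mul_div_assoc', inv_eq_one_div,
    div_le_div_iff₀ (Real.rpow_pos_of_pos hσ _)
      (prod_pos fun i _ ↦ Real.rpow_pos_of_pos (hs₀ i) _), one_mul]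
  calc ∏ i, s i ^ (κ + δ)
      ≤ c ^ (κ + δ) * (r ^ (κ + δ) * (∑ i, s i) ^ ((κ + δ) * (Fintype.card ι - 1))) := hprod
    _ ≤ c ^ (κ + δ) * (r ^ (δ * Fintype.card ι) * (∑ i, s i) ^ (Fintype.card ι * κ)) := by
        refine mul_le_mul_of_nonneg_left ?_ (Real.rpow_nonneg hc _)
        exact rpow_mul_rpow_le_rpow_mul_rpow hr hrσ (by linarith) (by ring)
    _ = _ := by ring

end RealInequalities

def tailWeight {n : ℕ} (δ r : ℝ) (x₀ z : Fin n → ℝ) : ℝ :=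
  r ^ δ / dist z x₀ ^ ((n : ℝ) + δ)

lemma tailWeight_nonneg {n : ℕ} {δ r : ℝ} (hr : 0 ≤ r) (x₀ z : Fin n → ℝ) :
    0 ≤ tailWeight δ r x₀ z :=
  div_nonneg (Real.rpow_nonneg hr δ) (Real.rpow_nonneg dist_nonneg _)

lemma measurable_tailWeight {n : ℕ} (δ r : ℝ) (x₀ : Fin n → ℝ) :
    Measurable (tailWeight δ r x₀) :=
  measurable_const.div ((measurable_id.dist measurable_const).pow_const _)

lemma tailWeight_mul_volume_closedBall {n : ℕ} {δ r : ℝ} (hr : 0 < r) (k : ℕ) :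
    r ^ δ / (2 ^ k * r) ^ ((n : ℝ) + δ) * (2 * (2 ^ (k + 1) * r)) ^ n =
      4 ^ n * ((2 : ℝ) ^ (-δ)) ^ k := by
  have h2k : (0 : ℝ) < 2 ^ k := by positivity
  rw [Real.rpow_add (by positivity), Real.rpow_natCast, Real.mul_rpow h2k.le hr.le,
    ← Real.rpow_pow_comm zero_le_two, Real.rpow_neg zero_le_two, inv_pow]
  have : (0 : ℝ) < r ^ δ := Real.rpow_pos_of_pos hr δ
  have : (0 : ℝ) < (2 ^ δ) ^ k := by positivity
  field_simp
  ring

lemma setLIntegral_annulus_tailWeight_le {n : ℕ} {δ r : ℝ} (f : (Fin n → ℝ) → ℝ)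
    (x₀ : Fin n → ℝ) (hr : 0 < r) (hδ : 0 ≤ δ) (k : ℕ) :
    ∫⁻ z in Metric.closedBall x₀ (2 ^ (k + 1) * r) \ Metric.ball x₀ (2 ^ k * r),
        ENNReal.ofReal (tailWeight δ r x₀ z * |f z|) ≤
      ENNReal.ofReal (4 ^ n) * ENNReal.ofReal ((2 : ℝ) ^ (-δ)) ^ k * hlMaxR f x₀ := by
  set c : ℝ := r ^ δ / (2 ^ k * r) ^ ((n : ℝ) + δ)
  have hweight : ∀ z ∈ Metric.closedBall x₀ (2 ^ (k + 1) * r) \ Metric.ball x₀ (2 ^ k * r),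
      ENNReal.ofReal (tailWeight δ r x₀ z * |f z|) ≤ ENNReal.ofReal c * ENNReal.ofReal |f z| := by
    rintro z ⟨-, hz⟩
    rw [Metric.mem_ball, not_lt] at hz
    rw [← ENNReal.ofReal_mul (by positivity)]
    refine ENNReal.ofReal_le_ofReal (mul_le_mul_of_nonneg_right ?_ (abs_nonneg _))
    exact div_le_div_of_nonneg_left (Real.rpow_nonneg hr.le δ) (by positivity)
      (Real.rpow_le_rpow (by positivity) hz (by positivity))
  calc ∫⁻ z in Metric.closedBall x₀ (2 ^ (k + 1) * r) \ Metric.ball x₀ (2 ^ k * r),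
          ENNReal.ofReal (tailWeight δ r x₀ z * |f z|)
      ≤ ∫⁻ z in Metric.closedBall x₀ (2 ^ (k + 1) * r),
          ENNReal.ofReal c * ENNReal.ofReal |f z| :=
        (setLIntegral_mono' (measurableSet_closedBall.diff measurableSet_ball) hweight).trans
          (lintegral_mono_set sdiff_subset)
    _ ≤ ENNReal.ofReal c * (ENNReal.ofReal (2 * (2 ^ (k + 1) * r)) ^ n * hlMaxR f x₀) := by
        rw [lintegral_const_mul' _ _ ENNReal.ofReal_ne_top]
        gcongr
        exact lintegral_closedBall_le_hlMaxR f x₀ (by positivity)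
    _ = ENNReal.ofReal (4 ^ n) * ENNReal.ofReal ((2 : ℝ) ^ (-δ)) ^ k * hlMaxR f x₀ := by
        rw [← mul_assoc, ← ENNReal.ofReal_pow (by positivity), ← ENNReal.ofReal_mul (by positivity),
          tailWeight_mul_volume_closedBall hr, ENNReal.ofReal_mul (by positivity),
          ENNReal.ofReal_pow (Real.rpow_nonneg zero_le_two _)]

lemma lintegral_tailWeight_mul_le {n : ℕ} {δ r : ℝ} {f : (Fin n → ℝ) → ℝ} {x₀ : Fin n → ℝ}
    (hsupp : Function.support f ⊆ (Metric.ball x₀ r)ᶜ) (hr : 0 < r)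
    (hδ : 0 < δ) :
    ∫⁻ z, ENNReal.ofReal (tailWeight δ r x₀ z * |f z|) ≤
      ENNReal.ofReal (4 ^ n / (1 - 2 ^ (-δ))) * hlMaxR f x₀ := by
  set annulus : ℕ → Set (Fin n → ℝ) :=
    fun k ↦ Metric.closedBall x₀ (2 ^ (k + 1) * r) \ Metric.ball x₀ (2 ^ k * r)
  have hq : (2 : ℝ) ^ (-δ) < 1 := Real.rpow_lt_one_of_one_lt_of_neg one_lt_two (by linarith)
  have hcover : Function.support f ⊆ ⋃ k, annulus k := by
    intro z hz
    have hrz : 1 ≤ dist z x₀ / r := by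
      rw [one_le_div hr]
      simpa using hsupp hz
    obtain ⟨k, hk, hk'⟩ := exists_nat_pow_near hrz one_lt_two
    rw [le_div_iff₀ hr] at hk
    rw [div_lt_iff₀ hr] at hk'
    exact Set.mem_iUnion.2 ⟨k, Metric.mem_closedBall.2 hk'.le, by simpa using hk⟩
  have hzero : ∀ z ∉ ⋃ k, annulus k, ENNReal.ofReal (tailWeight δ r x₀ z * |f z|) = 0 := by
    intro z hz
    rw [Function.notMem_support.1 fun h ↦ hz (hcover h), abs_zero, mul_zero, ENNReal.ofReal_zero]
  calc ∫⁻ z, ENNReal.ofReal (tailWeight δ r x₀ z * |f z|)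
      = ∫⁻ z in ⋃ k, annulus k, ENNReal.ofReal (tailWeight δ r x₀ z * |f z|) :=
        (setLIntegral_eq_of_support_subset fun z hz ↦ by_contra fun h ↦ hz (hzero z h)).symm
    _ ≤ ∑' k, ∫⁻ z in annulus k, ENNReal.ofReal (tailWeight δ r x₀ z * |f z|) :=
        lintegral_iUnion_le _ _
    _ ≤ ∑' k, ENNReal.ofReal (4 ^ n) * ENNReal.ofReal ((2 : ℝ) ^ (-δ)) ^ k * hlMaxR f x₀ :=
        ENNReal.tsum_le_tsum fun k ↦ setLIntegral_annulus_tailWeight_le f x₀ hr hδ.le k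
    _ = ENNReal.ofReal (4 ^ n / (1 - 2 ^ (-δ))) * hlMaxR f x₀ := by
        rw [ENNReal.tsum_mul_right, ENNReal.tsum_mul_left, ENNReal.tsum_geometric,
          ← ENNReal.ofReal_one, ← ENNReal.ofReal_sub _ (by positivity),
          ← ENNReal.ofReal_inv_of_pos (by linarith), ← ENNReal.ofReal_mul (by positivity),
          div_eq_mul_inv]

section Metric

variable {X : Type*} [PseudoMetricSpace X] {x x₀ z : X} {r : ℝ}

lemma dist_le_eight_sevenths_mul_dist (hx : dist x x₀ < r / 8) (hz : r ≤ dist z x₀) :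
    dist z x₀ ≤ 8 / 7 * dist x z := by
  linarith [dist_triangle z x x₀, dist_comm z x]

lemma dist_pos_of_dist_lt_eighth (hr : 0 < r) (hx : dist x x₀ < r / 8) (hz : r ≤ dist z x₀) :
    0 < dist x z := by
  linarith [dist_le_eight_sevenths_mul_dist hx hz]

lemma sum_dist_le_eight_sevenths_mul_sum_dist {ι : Type*} [Fintype ι] {y : ι → X}
    (hx : dist x x₀ < r / 8) (hy : ∀ j, r ≤ dist (y j) x₀) :
    ∑ j, dist (y j) x₀ ≤ 8 / 7 * ∑ j, dist x (y j) := by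
  rw [Finset.mul_sum]
  exact Finset.sum_le_sum fun j _ ↦ dist_le_eight_sevenths_mul_dist hx (hy j)

lemma sum_dist_pos {ι : Type*} [Fintype ι] {y : ι → X} (hr : 0 < r)
    (hy : ∀ j, r ≤ dist (y j) x₀) (j₀ : ι) : 0 < ∑ j, dist (y j) x₀ :=
  hr.trans_le ((hy j₀).trans (Finset.single_le_sum (fun _ _ ↦ dist_nonneg) (Finset.mem_univ j₀)))

end Metric

section Kernel

variable {n m : ℕ}

def SizeCondition (A : ℝ) (K : (Fin n → ℝ) → (Fin m → Fin n → ℝ) → ℝ) : Prop :=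
  ∀ (x : Fin n → ℝ) (y : Fin m → Fin n → ℝ), (∃ j, x ≠ y j) →
    |K x y| ≤ A * (∑ j, dist x (y j)) ^ (-(m * n : ℝ))

def RegularityCondition (γ A : ℝ) (K : (Fin n → ℝ) → (Fin m → Fin n → ℝ) → ℝ) : Prop :=
  ∀ (x x' : Fin n → ℝ) (y : Fin m → Fin n → ℝ) (D : ℝ),
    (∀ j, 8 * dist x x' < dist x (y j)) → 2 * dist x x' < D → (∀ j, 4 * D < dist x (y j)) →
    |K x y - K x' y| ≤ A * D ^ γ * (∑ j, dist x (y j)) ^ (-(m * n : ℝ) - γ)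

variable {γ A δ r : ℝ} {K : (Fin n → ℝ) → (Fin m → Fin n → ℝ) → ℝ} {x₀ x x' : Fin n → ℝ}
  {y : Fin m → Fin n → ℝ}

lemma RegularityCondition.abs_sub_le (hreg : RegularityCondition γ A K) (hm : 1 ≤ m) (hA : 0 ≤ A)
    (hr : 0 < r) (hx : dist x x₀ < r / 8) (hx' : dist x' x₀ < r / 8)
    (hy : ∀ j, r ≤ dist (y j) x₀) (hfar : ∀ j, 4 * r < dist x (y j))
    (hδ : 0 ≤ δ) (hδγ : δ * m ≤ γ) :
    |K x y - K x' y| ≤ (8 / 7) ^ (m * n + γ) * A * ∏ j, tailWeight δ r x₀ (y j) := by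
  have : Nonempty (Fin m) := ⟨⟨0, hm⟩⟩
  have hxx' : dist x x' < r / 4 := by linarith [dist_triangle_right x x' x₀]
  have hσ := sum_dist_pos hr hy ⟨0, hm⟩
  have hT := rpow_neg_le_mul_rpow_neg (p := m * n + γ) hσ (by norm_num)
    (sum_dist_le_eight_sevenths_mul_sum_dist hx hy)
    (add_nonneg (by positivity) ((mul_nonneg hδ m.cast_nonneg).trans hδγ))
  have hweight := rpow_mul_sum_rpow_neg_le_prod (s := fun j ↦ dist (y j) x₀) (κ := n) hr hy
    (Nat.cast_nonneg n) hδ (by simpa using hδγ)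
  simp only [Fintype.card_fin] at hweight
  rw [neg_add'] at hT
  calc |K x y - K x' y| ≤ A * r ^ γ * (∑ j, dist x (y j)) ^ (-(m * n : ℝ) - γ) :=
        hreg x x' y r (fun j ↦ by linarith [hfar j]) (by linarith) hfar
    _ ≤ A * r ^ γ * ((8 / 7) ^ (m * n + γ) * (∑ j, dist (y j) x₀) ^ (-(m * n : ℝ) - γ)) := by
        gcongr
    _ = (8 / 7) ^ (m * n + γ) * A * (r ^ γ * (∑ j, dist (y j) x₀) ^ (-(m * n : ℝ) - γ)) := by
        ring
    _ ≤ (8 / 7) ^ (m * n + γ) * A * ∏ j, tailWeight δ r x₀ (y j) := by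
        gcongr
        exact hweight

lemma SizeCondition.abs_sub_le (hsize : SizeCondition A K) (hA : 0 ≤ A)
    (hr : 0 < r) (hx : dist x x₀ < r / 8) (hx' : dist x' x₀ < r / 8)
    (hy : ∀ j, r ≤ dist (y j) x₀) {j₁ : Fin m} (hnear : dist x (y j₁) ≤ 4 * r)
    (hδ : 0 ≤ δ) (hδn : δ * (m - 1) ≤ n) :
    |K x y - K x' y| ≤ 2 * (8 / 7) ^ (m * n : ℝ) * 5 ^ (n + δ) * A *
      ∏ j, tailWeight δ r x₀ (y j) := by
  have hσ := sum_dist_pos hr hy j₁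
  have hterm : ∀ z, dist z x₀ < r / 8 →
      |K z y| ≤ A * ((8 / 7) ^ (m * n : ℝ) * (∑ j, dist (y j) x₀) ^ (-(m * n : ℝ))) := by
    intro z hz
    refine (hsize z y ⟨j₁, dist_pos.1 (dist_pos_of_dist_lt_eighth hr hz (hy j₁))⟩).trans ?_
    gcongr
    exact rpow_neg_le_mul_rpow_neg hσ (by norm_num)
      (sum_dist_le_eight_sevenths_mul_sum_dist hz hy) (by positivity)
  have hweight := sum_rpow_neg_le_mul_prod (s := fun j ↦ dist (y j) x₀) (κ := n) (c := 5) hr hy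
    (i₀ := j₁) (by linarith [dist_triangle_left (y j₁) x₀ x]) (Nat.cast_nonneg n) hδ
    (by simpa using hδn)
  simp only [Fintype.card_fin] at hweight
  calc |K x y - K x' y| ≤ |K x y| + |K x' y| := abs_sub _ _
    _ ≤ 2 * (8 / 7) ^ (m * n : ℝ) * A * (∑ j, dist (y j) x₀) ^ (-(m * n : ℝ)) := by
        linarith [hterm x hx, hterm x' hx']
    _ ≤ 2 * (8 / 7) ^ (m * n : ℝ) * A * (5 ^ (n + δ) * ∏ j, tailWeight δ r x₀ (y j)) := by
        gcongr
        exact hweight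
    _ = _ := by ring

lemma abs_sub_le_mul_prod_tailWeight (hm : 1 ≤ m) (hsize : SizeCondition A K)
    (hreg : RegularityCondition γ A K)
    (hr : 0 < r) (hx : dist x x₀ < r / 8) (hx' : dist x' x₀ < r / 8)
    (hy : ∀ j, r ≤ dist (y j) x₀) (hδ : 0 ≤ δ) (hδγ : δ * m ≤ γ) (hδn : δ * (m - 1) ≤ n) :
    |K x y - K x' y| ≤ ((8 / 7) ^ (m * n + γ) + 2 * (8 / 7) ^ (m * n : ℝ) * 5 ^ (n + δ)) * A *
      ∏ j, tailWeight δ r x₀ (y j) := by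
  have hdist₀ := dist_pos_of_dist_lt_eighth hr hx (hy ⟨0, hm⟩)
  have hA : 0 ≤ A := by
    refine nonneg_of_mul_nonneg_left ((abs_nonneg _).trans
      (hsize x y ⟨⟨0, hm⟩, dist_pos.1 hdist₀⟩)) (Real.rpow_pos_of_pos ?_ _)
    exact hdist₀.trans_le (Finset.single_le_sum (fun _ _ ↦ dist_nonneg) (Finset.mem_univ _))
  have hW : 0 ≤ A * ∏ j, tailWeight δ r x₀ (y j) :=
    mul_nonneg hA (Finset.prod_nonneg fun j _ ↦ tailWeight_nonneg hr.le x₀ (y j))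
  rw [add_mul, add_mul]
  by_cases hfar : ∀ j, 4 * r < dist x (y j)
  · refine (hreg.abs_sub_le hm hA hr hx hx' hy hfar hδ hδγ).trans
      (le_add_of_nonneg_right ?_)
    rw [mul_assoc]
    exact mul_nonneg (by positivity) hW
  · push Not at hfar
    obtain ⟨j₁, hj₁⟩ := hfar
    refine (hsize.abs_sub_le hA hr hx hx' hy hj₁ hδ hδn).trans
      (le_add_of_nonneg_left ?_)
    rw [mul_assoc]
    exact mul_nonneg (by positivity) hW

end Kernel

/-- size plus the regularity condition (1.11) imply a
Hörmander-type pointwise bound for differences of the kernel integral against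
functions supported outside a ball. -/
theorem statement13 (n m : ℕ) (hm : 1 ≤ m) (γ : ℝ) (hγ : 0 < γ) :
    ∃ C : ℝ, 0 < C ∧
      ∀ (A : ℝ) (K : (Fin n → ℝ) → (Fin m → Fin n → ℝ) → ℝ),
        (∀ (x : Fin n → ℝ) (y : Fin m → Fin n → ℝ), (∃ j, x ≠ y j) →
          |K x y| ≤ A * (∑ j, dist x (y j)) ^ (-(m * n : ℝ))) →
        (∀ (x x' : Fin n → ℝ) (y : Fin m → Fin n → ℝ) (D : ℝ),
          (∀ j, 8 * dist x x' < dist x (y j)) →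
          2 * dist x x' < D → (∀ j, 4 * D < dist x (y j)) →
          |K x y - K x' y| ≤
            A * D ^ γ * (∑ j, dist x (y j)) ^ (-(m * n : ℝ) - γ)) →
        ∀ (x₀ : Fin n → ℝ) (r : ℝ), 0 < r →
          ∀ x x' : Fin n → ℝ, x ∈ Metric.ball x₀ (r / 8) →
            x' ∈ Metric.ball x₀ (r / 8) →
            ∀ f : Fin m → (Fin n → ℝ) → ℝ, (∀ j, Measurable (f j)) →
              (∀ j, Function.support (f j) ⊆ (Metric.ball x₀ r)ᶜ) →
              Integrable (fun y : Fin m → Fin n → ℝ => K x y * ∏ j, f j (y j)) →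
              Integrable (fun y : Fin m → Fin n → ℝ => K x' y * ∏ j, f j (y j)) →
              ENNReal.ofReal
                  |(∫ y : Fin m → Fin n → ℝ, K x y * ∏ j, f j (y j)) -
                    ∫ y : Fin m → Fin n → ℝ, K x' y * ∏ j, f j (y j)| ≤
                ENNReal.ofReal (C * A) * ∏ j, hlMaxR (f j) x₀ := by
  rcases Nat.eq_zero_or_pos n with rfl | hn
  · refine ⟨1, one_pos, fun A K _ _ x₀ r _ x x' _ _ f _ _ _ _ ↦ ?_⟩
    rw [Subsingleton.elim x x', sub_self, abs_zero, ENNReal.ofReal_zero]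
    exact zero_le
  have hm₀ : (0 : ℝ) < m := by exact_mod_cast hm
  -- `δ * m ≤ γ` is what the regularity case needs, `δ * (m - 1) ≤ n` what the size case needs.
  set δ : ℝ := min γ n / m
  have hδ : 0 < δ := div_pos (lt_min hγ (by exact_mod_cast hn)) hm₀
  have hδm : δ * m = min γ n := div_mul_cancel₀ _ hm₀.ne'
  have hδγ : δ * m ≤ γ := hδm ▸ min_le_left _ _
  have hδn : δ * (m - 1) ≤ n := by linarith [min_le_right γ n]
  set C₁ : ℝ := (8 / 7) ^ (m * n + γ) + 2 * (8 / 7) ^ (m * n : ℝ) * 5 ^ (n + δ)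
  set C₂ : ℝ := 4 ^ n / (1 - 2 ^ (-δ))
  have hC₁ : 0 < C₁ := by positivity
  have hC₂ : 0 < C₂ :=
    div_pos (by positivity)
      (sub_pos.2 (Real.rpow_lt_one_of_one_lt_of_neg one_lt_two (neg_neg_of_pos hδ)))
  refine ⟨C₁ * C₂ ^ m, mul_pos hC₁ (pow_pos hC₂ m), ?_⟩
  intro A K hsize hreg x₀ r hr x x' hx hx' f hf hsupp h₁ h₂
  calc _ ≤ ENNReal.ofReal (C₁ * A) * ∏ j, ∫⁻ z, ENNReal.ofReal (tailWeight δ r x₀ z * |f j z|) :=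
      ofReal_abs_integral_sub_le_mul_prod_lintegral hf (measurable_tailWeight δ r x₀)
        (tailWeight_nonneg hr.le x₀) hsupp
        (fun y hy ↦ abs_sub_le_mul_prod_tailWeight hm hsize hreg hr hx hx'
          (fun j ↦ by simpa using hy j) hδ.le hδγ hδn) h₁ h₂
    _ ≤ ENNReal.ofReal (C₁ * A) * ∏ j, (ENNReal.ofReal C₂ * hlMaxR (f j) x₀) := by
      gcongr with j
      exact lintegral_tailWeight_mul_le (hsupp j) hr hδ
    _ = ENNReal.ofReal (C₁ * C₂ ^ m * A) * ∏ j, hlMaxR (f j) x₀ := by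
      rw [Finset.prod_mul_distrib, Finset.prod_const, Finset.card_univ, Fintype.card_fin,
        ← ENNReal.ofReal_pow hC₂.le, mul_right_comm C₁, ENNReal.ofReal_mul' (pow_nonneg hC₂.le m),
        mul_assoc]
end
end
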